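/- Fix an integer a > 1 and let p(k) be the coefficient of s^k in exp(∑_{m ∈ aℕ} s^m/m). Then p(an) = (1/Γ(1/a))·n^{1/a − 1}·(1 + O(1/n)) as n → ∞, while p(m) = 0 for every m not divisible by a. In particular there is no constant C > 0 with p(n) = C·n^{1/a − 1}(1 + O(n^{-β})) along all integers n, even though B(k) = ∑_{l≤k} l·p(l) has a power-law asymptotic with remainder O(1/k). -/

import Mathlib

open scoped Classical in
/-- The formal power series `∑_{m ∈ A} s^m / m` over `ℝ`. -/
noncomputable def genFun (A : Set ℕ) : PowerSeries ℝ :=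
  PowerSeries.mk fun m => if m ∈ A then (1 : ℝ) / m else 0

/-- The coefficient of `s^k` in the formal power series `exp (∑_{m ∈ A} s^m / m)`.
Since `genFun A` has zero constant term, only the powers `(genFun A)^j` with `j ≤ k`
contribute to the coefficient of `s^k` in `exp (genFun A) = ∑_j (genFun A)^j / j!`,
so this finite sum is exactly that coefficient. -/
noncomputable def pCoeff (A : Set ℕ) (k : ℕ) : ℝ :=
  ∑ j ∈ Finset.range (k + 1),
    PowerSeries.coeff k (genFun A ^ j) / (Nat.factorial j : ℝ)

/-- The set `aℕ` of positive multiples of `a`. -/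
def posMultiples (a : ℕ) : Set ℕ := {m : ℕ | 0 < m ∧ a ∣ m}

open PowerSeries Finset

lemma genFun_const (A : Set ℕ) : constantCoeff (genFun A) = 0 := by
  have : constantCoeff (genFun A) = coeff 0 (genFun A) := by
    simp [PowerSeries.coeff_zero_eq_constantCoeff]
  rw [this]
  simp only [genFun, coeff_mk]
  split_ifs <;> simp

lemma coeff_genFun_pow_eq_zero (A : Set ℕ) {k j : ℕ} (h : k < j) :
    coeff k (genFun A ^ j) = 0 := by
  have hd : (X : PowerSeries ℝ) ^ j ∣ genFun A ^ j :=
    pow_dvd_pow_of_dvd (X_dvd_iff.mpr (genFun_const A)) j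
  exact (X_pow_dvd_iff.mp hd) k h

lemma pCoeff_zero (A : Set ℕ) : pCoeff A 0 = 1 := by
  simp [pCoeff]

lemma pCoeff_eq_sum (A : Set ℕ) {k M : ℕ} (hk : k < M) :
    pCoeff A k = ∑ j ∈ Finset.range M, coeff k (genFun A ^ j) / (Nat.factorial j : ℝ) := by
  rw [pCoeff]
  apply Finset.sum_subset
  · intro x hx
    simp only [mem_range] at hx ⊢; omega
  · intro x _ hx
    simp only [mem_range, not_lt] at hx
    rw [coeff_genFun_pow_eq_zero A (by omega)]
    simp

lemma pCoeff_recursion (A : Set ℕ) {k : ℕ} (hk : 1 ≤ k) :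
    (k:ℝ) * pCoeff A k =
      ∑ i ∈ range k, (coeff (k-i) (genFun A) * ((k-i : ℕ):ℝ)) * pCoeff A i := by
  classical
  set G := genFun A with hG
  set w : ℕ → ℝ := fun i => coeff (k-i) G * ((k-i : ℕ):ℝ) with hw
  have hc : ((k-1 : ℕ):ℝ) + 1 = (k:ℝ) := by
    exact_mod_cast congrArg (Nat.cast : ℕ → ℝ) (by omega : k - 1 + 1 = k)
  have key : ∀ j : ℕ, (k:ℝ) * coeff k (G ^ (j+1)) =
      ((j:ℝ)+1) * ∑ i ∈ range k, coeff i (G ^ j) * w i := by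
    intro j
    have h1 := coeff_derivative (G ^ (j+1)) (k-1)
    rw [Nat.sub_add_cancel hk] at h1
    have h2 : PowerSeries.derivative ℝ (G ^ (j+1)) = (j+1) • ((G ^ j) • PowerSeries.derivative ℝ G) := by
      simpa using Derivation.leibniz_pow (PowerSeries.derivative ℝ) G (j+1)
    have h4 : coeff (k-1) (G ^ j * PowerSeries.derivative ℝ G)
        = ∑ i ∈ range k, coeff i (G ^ j) * w i := by
      rw [coeff_mul, Finset.Nat.sum_antidiagonal_eq_sum_range_succ_mk]
      rw [show (k-1).succ = k by omega]
      refine Finset.sum_congr rfl fun i hi => ?_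
      simp only [mem_range] at hi
      rw [coeff_derivative]
      have h5 : k - 1 - i + 1 = k - i := by omega
      have h6 : ((k-1-i : ℕ):ℝ) + 1 = ((k-i : ℕ):ℝ) := by
        exact_mod_cast congrArg (Nat.cast : ℕ → ℝ) h5
      rw [h5, h6, hw]
    have h3 : coeff (k-1) (PowerSeries.derivative ℝ (G^(j+1)))
        = ((j:ℝ)+1) * coeff (k-1) (G ^ j * PowerSeries.derivative ℝ G) := by
      rw [h2, smul_eq_mul, map_nsmul, nsmul_eq_mul]
      push_cast
      ring
    rw [← h4, ← h3, h1, hc]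
    ring
  have expand : (k:ℝ) * pCoeff A k
      = ∑ j ∈ range (k+1), (k:ℝ) * coeff k (G ^ j) / (Nat.factorial j : ℝ) := by
    rw [pCoeff, Finset.mul_sum]
    exact Finset.sum_congr rfl fun j _ => (mul_div_assoc _ _ _).symm
  rw [expand, Finset.sum_range_succ']
  have hzero : (k:ℝ) * coeff k (G ^ 0) / (Nat.factorial 0 : ℝ) = 0 := by
    have hk0 : k ≠ 0 := by omega
    simp [pow_zero, coeff_one, hk0]
  rw [hzero, add_zero]
  have step : ∀ j ∈ range k, (k:ℝ) * coeff k (G ^ (j+1)) / (Nat.factorial (j+1) : ℝ)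
      = ∑ i ∈ range k, (coeff i (G ^ j) / (Nat.factorial j : ℝ)) * w i := by
    intro j _
    rw [key j, Nat.factorial_succ]
    push_cast
    rw [mul_div_mul_left _ _ (by positivity : ((j:ℝ)+1) ≠ 0), Finset.sum_div]
    exact Finset.sum_congr rfl fun i _ => by ring
  rw [Finset.sum_congr rfl step, Finset.sum_comm]
  refine Finset.sum_congr rfl fun i hi => ?_
  simp only [mem_range] at hi
  rw [← Finset.sum_mul, ← pCoeff_eq_sum A hi]
  simp only [hw]
  ring

noncomputable def Pprod (y : ℝ) : ℕ → ℝ := fun n => ∏ i ∈ Finset.range n, (y + i) / (i + 1)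

lemma Pprod_zero (y : ℝ) : Pprod y 0 = 1 := by simp [Pprod]

lemma Pprod_succ (y : ℝ) (n : ℕ) : Pprod y (n+1) = Pprod y n * ((y+n)/(n+1)) := by
  simp only [Pprod, Finset.prod_range_succ]

lemma Pprod_pos {y : ℝ} (hy : 0 < y) (n : ℕ) : 0 < Pprod y n := by
  refine Finset.prod_pos fun i _ => div_pos (by positivity) (by positivity)

lemma sum_Pprod_eq (a : ℕ) (ha : 1 < a) :
    ∀ n : ℕ, ∑ u ∈ Finset.range n, Pprod (1/(a:ℝ)) u = (a:ℝ) * n * Pprod (1/(a:ℝ)) n := by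
  have ha0 : (a:ℝ) ≠ 0 := by positivity
  intro n
  induction n with
  | zero => simp
  | succ n ih =>
    rw [Finset.sum_range_succ, ih, Pprod_succ]
    have hn1 : ((n:ℝ)+1) ≠ 0 := by positivity
    push_cast
    field_simp
    ring

lemma sum_multiples (f : ℕ → ℝ) (a : ℕ) (ha : 1 < a) (n : ℕ) :
    ∑ i ∈ Finset.range (a*n), (if a ∣ i then f i else 0) = ∑ u ∈ Finset.range n, f (a*u) := by
  induction n with
  | zero => simp
  | succ n ih =>
    have h1 : a * n ≤ a * (n+1) := by nlinarith
    rw [Finset.range_eq_Ico, ← Finset.sum_Ico_consecutive _ (Nat.zero_le (a*n)) h1,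
      ← Finset.range_eq_Ico, ih, Finset.sum_range_succ]
    congr 1
    rw [Finset.sum_eq_single_of_mem (a*n)
      (by simp only [Finset.mem_Ico]; exact ⟨le_refl _, by nlinarith⟩)]
    · simp
    · intro i hi hne
      simp only [Finset.mem_Ico] at hi
      have : ¬ a ∣ i := by
        rcases hi with ⟨h2, h3⟩
        intro ⟨c, hc⟩
        subst hc
        have hc1 : n ≤ c := Nat.le_of_mul_le_mul_left h2 (by omega)
        have hc2 : c < n+1 := by
          by_contra hcon
          push_neg at hcon
          exact absurd (Nat.mul_le_mul_left a hcon) (by omega)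
        have : c = n := by omega
        exact hne (by rw [this])
      simp [this]

lemma coeff_genFun_mul (a : ℕ) {m : ℕ} (hm : 0 < m) :
    coeff m (genFun (posMultiples a)) * (m:ℝ) = if a ∣ m then 1 else 0 := by
  classical
  have hm' : (m:ℝ) ≠ 0 := by positivity
  simp only [genFun, coeff_mk, posMultiples, Set.mem_setOf_eq]
  by_cases h : a ∣ m
  · rw [if_pos ⟨hm, h⟩, if_pos h]
    field_simp
  · rw [if_neg (by tauto), if_neg h, zero_mul]

lemma pCoeff_recursion' (a : ℕ) {k : ℕ} (hk : 1 ≤ k) :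
    (k:ℝ) * pCoeff (posMultiples a) k =
      ∑ i ∈ range k, (if a ∣ (k - i) then (1:ℝ) else 0) * pCoeff (posMultiples a) i := by
  rw [pCoeff_recursion (posMultiples a) hk]
  refine Finset.sum_congr rfl fun i hi => ?_
  simp only [mem_range] at hi
  rw [coeff_genFun_mul a (by omega : 0 < k - i)]

lemma pCoeff_formula (a : ℕ) (ha : 1 < a) : ∀ k : ℕ,
    (¬ a ∣ k → pCoeff (posMultiples a) k = 0) ∧
    (∀ n, k = a * n → pCoeff (posMultiples a) k = Pprod (1/(a:ℝ)) n) := by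
  intro k
  induction k using Nat.strong_induction_on with
  | _ k IH =>
  rcases Nat.eq_zero_or_pos k with hk0 | hk1
  · subst hk0
    refine ⟨fun h => absurd (dvd_zero a) h, fun n hn => ?_⟩
    have hn0 : n = 0 := by
      rcases Nat.eq_zero_or_pos n with h | h
      · exact h
      · exfalso; have : 0 < a * n := Nat.mul_pos (by omega) h; omega
    subst hn0
    rw [pCoeff_zero, Pprod_zero]
  · have hrec := pCoeff_recursion' a hk1
    constructor
    · intro hnd
      have hsum : ∑ i ∈ range k, (if a ∣ (k - i) then (1:ℝ) else 0) * pCoeff (posMultiples a) i = 0 := by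
        refine Finset.sum_eq_zero fun i hi => ?_
        simp only [mem_range] at hi
        by_cases hd : a ∣ (k - i)
        · have hni : ¬ a ∣ i := by
            intro hai
            exact hnd (by have := Nat.dvd_add hd hai; rwa [Nat.sub_add_cancel (le_of_lt hi)] at this)
          rw [(IH i hi).1 hni, mul_zero]
        · rw [if_neg hd, zero_mul]
      rw [hsum] at hrec
      have : (k:ℝ) ≠ 0 := by positivity
      exact (mul_eq_zero.mp hrec).resolve_left this
    · intro n hn
      subst hn
      have hn1 : 1 ≤ n := by
        by_contra h
        push_neg at h
        interval_cases n <;> omega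
      have htrans : ∑ i ∈ range (a*n), (if a ∣ (a*n - i) then (1:ℝ) else 0) * pCoeff (posMultiples a) i
          = ∑ i ∈ range (a*n), (if a ∣ i then pCoeff (posMultiples a) i else 0) := by
        refine Finset.sum_congr rfl fun i hi => ?_
        simp only [mem_range] at hi
        have hiff : a ∣ (a*n - i) ↔ a ∣ i := by
          constructor
          · intro hd
            have := Nat.dvd_sub (Dvd.intro n rfl) hd
            rwa [Nat.sub_sub_self (le_of_lt hi)] at this
          · intro hd
            exact Nat.dvd_sub (Dvd.intro n rfl) hd
        by_cases hd : a ∣ i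
        · rw [if_pos (hiff.mpr hd), if_pos hd, one_mul]
        · rw [if_neg (fun h => hd (hiff.mp h)), if_neg hd, zero_mul]
      rw [htrans, sum_multiples _ a ha] at hrec
      have hvals : ∑ u ∈ range n, pCoeff (posMultiples a) (a*u)
          = ∑ u ∈ range n, Pprod (1/(a:ℝ)) u := by
        refine Finset.sum_congr rfl fun u hu => ?_
        simp only [mem_range] at hu
        have hlt : a * u < a * n := by
          have h0 : 0 < a := by omega
          exact (Nat.mul_lt_mul_left h0).mpr hu
        exact (IH (a*u) hlt).2 u rfl
      rw [hvals, sum_Pprod_eq a ha] at hrec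
      have hcast : ((a*n : ℕ):ℝ) = (a:ℝ) * (n:ℝ) := by push_cast; ring
      rw [hcast] at hrec
      have hne : (a:ℝ) * (n:ℝ) ≠ 0 := by
        have : (0:ℝ) < a := by positivity
        have : (0:ℝ) < n := by exact_mod_cast hn1
        positivity
      exact mul_left_cancel₀ hne hrec
lemma Pprod_shift (y : ℝ) : ∀ M : ℕ, Pprod y (M+1) * ((M:ℝ)+1) = y * Pprod (y+1) M := by
  intro M
  induction M with
  | zero => simp [Pprod_succ, Pprod_zero]
  | succ M IH =>
    rw [Pprod_succ y (M+1), Pprod_succ (y+1) M]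
    have h1 : ((M:ℝ)+1) ≠ 0 := by positivity
    have h2 : ((M:ℝ)+1+1) ≠ 0 := by positivity
    push_cast
    field_simp
    push_cast at IH ⊢
    linear_combination (y + (M:ℝ) + 1) * IH

lemma sum_Pprod_hockey (y : ℝ) : ∀ M : ℕ, ∑ u ∈ range (M+1), Pprod y u = Pprod (y+1) M := by
  intro M
  induction M with
  | zero => simp [Pprod_zero]
  | succ M IH =>
    rw [Finset.sum_range_succ, IH, Pprod_succ (y+1) M]
    have hS := Pprod_shift y M
    have h1 : ((M:ℝ)+1) ≠ 0 := by positivity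
    field_simp
    linear_combination hS

lemma sum_n_Pprod (y : ℝ) (M : ℕ) :
    ∑ n ∈ range (M+2), (n:ℝ) * Pprod y n = y * Pprod (y+2) M := by
  rw [Finset.sum_range_succ']
  simp only [Nat.cast_zero, zero_mul, add_zero]
  have h1 : ∀ m ∈ range (M+1), ((m:ℝ)+1) * Pprod y (m+1) = y * Pprod (y+1) m := by
    intro m _
    rw [mul_comm, Pprod_shift y m]
  calc ∑ m ∈ range (M+1), ((m+1 : ℕ):ℝ) * Pprod y (m+1)
      = ∑ m ∈ range (M+1), y * Pprod (y+1) m := by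
        refine Finset.sum_congr rfl fun m hm => ?_
        rw [← h1 m hm]; push_cast; ring
    _ = y * ∑ m ∈ range (M+1), Pprod (y+1) m := by rw [Finset.mul_sum]
    _ = y * Pprod (y+2) M := by rw [sum_Pprod_hockey (y+1) M]; ring_nf

lemma B_formula (a : ℕ) (ha : 1 < a) {k : ℕ} (hk : a ≤ k) :
    ∑ l ∈ Finset.Icc 1 k, (l:ℝ) * pCoeff (posMultiples a) l
      = Pprod (1/(a:ℝ) + 2) (k/a - 1) := by
  classical
  obtain ⟨N, hN⟩ : ∃ N, N = k / a := ⟨_, rfl⟩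
  have hdm := Nat.div_add_mod k a
  have hml : k % a < a := Nat.mod_lt _ (by omega)
  have hN1 : 1 ≤ N := by rw [hN]; exact (Nat.one_le_div_iff (by omega)).mpr hk
  have hNk : a * N ≤ k := by rw [hN]; exact Nat.le.intro hdm
  have hkN : k < a * (N + 1) := by
    rw [hN, Nat.mul_succ]
    omega
  have s1 : ∑ l ∈ Finset.Icc 1 k, (l:ℝ) * pCoeff (posMultiples a) l
      = ∑ l ∈ range (k+1), (l:ℝ) * pCoeff (posMultiples a) l := by
    rw [Finset.range_eq_Ico, show Finset.Icc 1 k = Finset.Ico 1 (k+1) by rw [Finset.Ico_add_one_right_eq_Icc],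
      ← Finset.sum_Ico_consecutive _ (by omega : 0 ≤ 1) (by omega : 1 ≤ k+1)]
    simp
  have s2 : ∑ l ∈ range (k+1), (l:ℝ) * pCoeff (posMultiples a) l
      = ∑ l ∈ range (a*(N+1)), (l:ℝ) * pCoeff (posMultiples a) l := by
    apply Finset.sum_subset
    · intro x hx
      simp only [mem_range] at hx ⊢
      omega
    · intro l hl hl2
      simp only [mem_range] at hl hl2
      have hnd : ¬ a ∣ l := by
        rintro ⟨c, rfl⟩
        rcases le_or_gt c N with h | h
        · exact absurd (le_trans (Nat.mul_le_mul_left a h) hNk) (by omega)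
        · have h' : N + 1 ≤ c := h
          exact absurd (Nat.mul_le_mul_left a h') (by omega)
      rw [(pCoeff_formula a ha l).1 hnd, mul_zero]
  have s3 : ∑ l ∈ range (a*(N+1)), (l:ℝ) * pCoeff (posMultiples a) l
      = ∑ l ∈ range (a*(N+1)), (if a ∣ l then (l:ℝ) * pCoeff (posMultiples a) l else 0) := by
    refine Finset.sum_congr rfl fun l _ => ?_
    by_cases hd : a ∣ l
    · rw [if_pos hd]
    · rw [if_neg hd, (pCoeff_formula a ha l).1 hd, mul_zero]
  rw [s1, s2, s3, sum_multiples _ a ha]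
  have s4 : ∀ u, ((a*u : ℕ):ℝ) * pCoeff (posMultiples a) (a*u)
      = (a:ℝ) * ((u:ℝ) * Pprod (1/(a:ℝ)) u) := by
    intro u
    rw [(pCoeff_formula a ha (a*u)).2 u rfl]
    push_cast
    ring
  rw [Finset.sum_congr rfl fun u _ => s4 u, ← Finset.mul_sum]
  rw [show N + 1 = (N - 1) + 2 by omega]
  rw [sum_n_Pprod (1/(a:ℝ)) (N-1), ← hN]
  have haR : (a:ℝ) ≠ 0 := by positivity
  field_simp

lemma log_approx {v : ℝ} (hv : 0 ≤ v) : |Real.log (1+v) - v| ≤ v^2 := by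
  have h1 : (0:ℝ) < 1 + v := by linarith
  have hub : Real.log (1+v) ≤ v := by
    have := Real.log_le_sub_one_of_pos h1
    linarith
  have hlb : v - v^2 ≤ Real.log (1+v) := by
    have h2 : (0:ℝ) < (1+v)⁻¹ := by positivity
    have := Real.log_le_sub_one_of_pos h2
    rw [Real.log_inv] at this
    have h3 : v / (1+v) ≤ Real.log (1+v) := by
      have : (1+v)⁻¹ - 1 = -(v/(1+v)) := by field_simp; ring
      linarith [Real.log_le_sub_one_of_pos h2, this]
    have h4 : v - v^2 ≤ v / (1+v) := by
      rw [le_div_iff₀ h1]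
      nlinarith [hv, sq_nonneg v]
    linarith
  rw [abs_sub_le_iff]
  constructor <;> nlinarith

noncomputable def Lfun (y : ℝ) (n : ℕ) : ℝ := Real.log (Pprod y n) + (1 - y) * Real.log n

lemma Lfun_step (y : ℝ) (hy : 0 < y) {n : ℕ} (hn : 1 ≤ n) :
    Lfun y (n+1) - Lfun y n = (Real.log (1 + y/n) - y/n) - y * (Real.log (1 + 1/n) - 1/n) := by
  have hn0 : (0:ℝ) < n := by exact_mod_cast hn
  have h1 : Pprod y (n+1) = Pprod y n * ((y+n)/(n+1)) := Pprod_succ y n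
  have h2 : Real.log (Pprod y (n+1)) = Real.log (Pprod y n) + (Real.log (y+(n:ℝ)) - Real.log ((n:ℝ)+1)) := by
    rw [h1, Real.log_mul (ne_of_gt (Pprod_pos hy n)) (by positivity), Real.log_div (by positivity) (by positivity)]
  have h3 : Real.log (1 + y/(n:ℝ)) = Real.log (y+(n:ℝ)) - Real.log (n:ℝ) := by
    rw [show (1:ℝ) + y/n = (y+(n:ℝ))/n by rw [add_div, div_self (ne_of_gt hn0), add_comm], Real.log_div (by positivity) (by positivity)]
  have h4 : Real.log (1 + 1/(n:ℝ)) = Real.log ((n:ℝ)+1) - Real.log (n:ℝ) := by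
    rw [show (1:ℝ) + 1/n = ((n:ℝ)+1)/n by rw [add_div, div_self (ne_of_gt hn0), add_comm], Real.log_div (by positivity) (by positivity)]
  have h5 : Real.log ((n:ℕ)+1 : ℝ) = Real.log ((n:ℝ)+1) := by norm_cast
  simp only [Lfun, h2]
  push_cast
  rw [h3, h4]
  ring

lemma Lfun_step_bound (y : ℝ) (hy : 0 < y) {n : ℕ} (hn : 1 ≤ n) :
    |Lfun y (n+1) - Lfun y n| ≤ (y^2 + y) / (n:ℝ)^2 := by
  have hn0 : (0:ℝ) < n := by exact_mod_cast hn
  rw [Lfun_step y hy hn]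
  have b1 := log_approx (v := y/n) (by positivity)
  have b2 := log_approx (v := 1/(n:ℝ)) (by positivity)
  have e1 : (y/(n:ℝ))^2 = y^2/(n:ℝ)^2 := by ring
  have e2 : (1/(n:ℝ))^2 = 1/(n:ℝ)^2 := by ring
  calc |(Real.log (1 + y/n) - y/n) - y * (Real.log (1 + 1/n) - 1/n)|
      ≤ |Real.log (1 + y/n) - y/n| + |y * (Real.log (1 + 1/n) - 1/n)| := abs_sub _ _
    _ ≤ y^2/(n:ℝ)^2 + y * (1/(n:ℝ)^2) := by
        rw [abs_mul, abs_of_pos hy]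
        gcongr
        · rw [← e1]; exact b1
        · rw [← e2]; exact b2
    _ = (y^2 + y) / (n:ℝ)^2 := by ring

lemma Lfun_telescope (y : ℝ) (hy : 0 < y) {n : ℕ} (hn : 2 ≤ n) :
    ∀ m : ℕ, n ≤ m → |Lfun y m - Lfun y n| ≤ (y^2+y) * (1/((n:ℝ)-1) - 1/((m:ℝ)-1)) := by
  intro m hm
  induction m with
  | zero => omega
  | succ m IH =>
    have hn0 : (2:ℝ) ≤ n := by exact_mod_cast hn
    rcases Nat.lt_or_ge n (m+1) with h | h
    · have hnm : n ≤ m := by omega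
      have hm0 : (n:ℝ) ≤ m := by exact_mod_cast hnm
      have hIH := IH hnm
      have hstep := Lfun_step_bound y hy (n := m) (by omega)
      have key : (1:ℝ)/(m:ℝ)^2 ≤ 1/((m:ℝ)-1) - 1/((m:ℝ)+1-1) := by
        have hm1 : (1:ℝ) < m := by linarith
        rw [show (m:ℝ)+1-1 = (m:ℝ) by ring]
        rw [div_sub_div _ _ (by linarith : (m:ℝ)-1 ≠ 0) (by linarith : (m:ℝ) ≠ 0)]
        rw [div_le_div_iff₀ (by positivity) (by nlinarith)]
        nlinarith
      push_cast
      calc |Lfun y (m+1) - Lfun y n|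
          ≤ |Lfun y m - Lfun y n| + |Lfun y (m+1) - Lfun y m| := by
            have := abs_add_le (Lfun y m - Lfun y n) (Lfun y (m+1) - Lfun y m)
            rw [show Lfun y m - Lfun y n + (Lfun y (m+1) - Lfun y m) = Lfun y (m+1) - Lfun y n by ring] at this
            exact this
        _ ≤ (y^2+y) * (1/((n:ℝ)-1) - 1/((m:ℝ)-1)) + (y^2+y)/(m:ℝ)^2 := by
            gcongr
        _ ≤ (y^2+y) * (1/((n:ℝ)-1) - 1/(((m:ℕ)+1:ℝ)-1)) := by
            push_cast
            have hC : (y^2+y)/(m:ℝ)^2 ≤ (y^2+y)*(1/((m:ℝ)-1) - 1/((m:ℝ)+1-1)) := by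
              rw [div_eq_mul_one_div]
              exact mul_le_mul_of_nonneg_left key (by positivity)
            have expand : (y^2+y) * (1/((n:ℝ)-1) - 1/((m:ℝ)-1)) + (y^2+y)*(1/((m:ℝ)-1) - 1/((m:ℝ)+1-1)) = (y^2+y) * (1/((n:ℝ)-1) - 1/((m:ℝ)+1-1)) := by ring
            linarith
    · have : n = m + 1 := by omega
      subst this
      simp

lemma Pprod_eq_div (y : ℝ) (n : ℕ) :
    Pprod y n = (∏ i ∈ range n, (y + (i:ℝ))) / (Nat.factorial n : ℝ) := by
  rw [Pprod, Finset.prod_div_distrib]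
  congr 1
  rw [show ((Nat.factorial n : ℕ):ℝ) = ∏ i ∈ range n, ((i:ℝ)+1) by
    rw [← Finset.prod_range_add_one_eq_factorial, Nat.cast_prod]
    push_cast
    rfl]

lemma g_tendsto (y : ℝ) (hy : 0 < y) :
    Filter.Tendsto (fun n : ℕ => Pprod y n * (n:ℝ)^((1:ℝ)-y)) Filter.atTop
      (nhds (Real.Gamma y)⁻¹) := by
  have hG : Real.Gamma y ≠ 0 := ne_of_gt (Real.Gamma_pos_of_pos hy)
  have h1 : Filter.Tendsto (fun n : ℕ => (Real.GammaSeq y n)⁻¹) Filter.atTop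
      (nhds (Real.Gamma y)⁻¹) := (Real.GammaSeq_tendsto_Gamma y).inv₀ hG
  have h2 : Filter.Tendsto (fun n : ℕ => (n:ℝ)/(y+(n:ℝ))) Filter.atTop (nhds 1) := by
    have := Filter.Tendsto.comp (tendsto_natCast_div_add_atTop y) Filter.tendsto_id
    simpa [Function.comp, add_comm] using this
  have h3 := h1.mul h2
  rw [mul_one] at h3
  apply h3.congr'
  filter_upwards [Filter.eventually_ge_atTop 1] with n hn
  have hn0 : (0:ℝ) < n := by exact_mod_cast hn
  have hP : (0:ℝ) < ∏ i ∈ range n, (y + (i:ℝ)) := Finset.prod_pos fun i _ => by positivity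
  have hfac : (0:ℝ) < (Nat.factorial n : ℝ) := by positivity
  have hGS : Real.GammaSeq y n = (n:ℝ)^y * (Nat.factorial n : ℝ) / ((∏ i ∈ range n, (y + (i:ℝ))) * (y + n)) := by
    rw [Real.GammaSeq, Finset.prod_range_succ]
  rw [hGS, Pprod_eq_div]
  rw [Real.rpow_sub hn0, Real.rpow_one]
  have hny : (0:ℝ) < (n:ℝ)^y := Real.rpow_pos_of_pos hn0 y
  field_simp

lemma Lfun_tendsto (y : ℝ) (hy : 0 < y) :
    Filter.Tendsto (Lfun y) Filter.atTop (nhds (Real.log (Real.Gamma y)⁻¹)) := by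
  have hG : (Real.Gamma y)⁻¹ ≠ 0 := inv_ne_zero (ne_of_gt (Real.Gamma_pos_of_pos hy))
  have h := (Real.continuousAt_log hG).tendsto.comp (g_tendsto y hy)
  apply h.congr'
  filter_upwards [Filter.eventually_ge_atTop 1] with n hn
  have hn0 : (0:ℝ) < n := by exact_mod_cast hn
  simp only [Function.comp]
  rw [Real.log_mul (ne_of_gt (Pprod_pos hy n)) (ne_of_gt (Real.rpow_pos_of_pos hn0 _)),
    Real.log_rpow hn0, Lfun]

lemma Lfun_dist (y : ℝ) (hy : 0 < y) {n : ℕ} (hn : 2 ≤ n) :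
    |Lfun y n - Real.log (Real.Gamma y)⁻¹| ≤ 2*(y^2+y)/(n:ℝ) := by
  have hn0 : (2:ℝ) ≤ n := by exact_mod_cast hn
  have step1 : |Real.log (Real.Gamma y)⁻¹ - Lfun y n| ≤ (y^2+y)/((n:ℝ)-1) := by
    apply le_of_tendsto (((Lfun_tendsto y hy).sub_const (Lfun y n)).abs)
    filter_upwards [Filter.eventually_ge_atTop n] with m hm
    have hb := Lfun_telescope y hy hn m hm
    have hm1 : (n:ℝ) ≤ m := by exact_mod_cast hm
    have : (0:ℝ) ≤ 1/((m:ℝ)-1) := by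
      apply div_nonneg zero_le_one
      linarith
    calc |Lfun y m - Lfun y n| ≤ (y^2+y) * (1/((n:ℝ)-1) - 1/((m:ℝ)-1)) := hb
      _ ≤ (y^2+y) * (1/((n:ℝ)-1)) := by
          apply mul_le_mul_of_nonneg_left _ (by positivity)
          linarith
      _ = (y^2+y)/((n:ℝ)-1) := by ring
  rw [abs_sub_comm]
  calc |Real.log (Real.Gamma y)⁻¹ - Lfun y n| ≤ (y^2+y)/((n:ℝ)-1) := step1
    _ ≤ 2*(y^2+y)/(n:ℝ) := by
        rw [div_le_div_iff₀ (by linarith) (by linarith)]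
        nlinarith [sq_nonneg y, hy.le]

lemma Pprod_asym (y : ℝ) (hy : 0 < y) :
    ∃ C : ℝ, 0 ≤ C ∧ ∃ N : ℕ, 1 ≤ N ∧ ∀ n : ℕ, N ≤ n →
      |Pprod y n - (Real.Gamma y)⁻¹ * (n:ℝ)^(y-1)| ≤
        C * ((Real.Gamma y)⁻¹ * (n:ℝ)^(y-1)) * (1/(n:ℝ)) := by
  set Λ := Real.log (Real.Gamma y)⁻¹ with hΛ
  set Cy := y^2 + y with hCy
  have hCy0 : 0 < Cy := by positivity
  refine ⟨4*Cy, by positivity, max 2 (⌈2*Cy⌉₊ + 1), le_trans (by norm_num) (le_max_left _ _), ?_⟩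
  intro n hn
  have hn2 : 2 ≤ n := le_trans (le_max_left _ _) hn
  have hnC : (2*Cy : ℝ) ≤ n := by
    have h1 : (⌈2*Cy⌉₊ : ℕ) + 1 ≤ n := le_trans (le_max_right _ _) hn
    have h2 : (2*Cy : ℝ) ≤ (⌈2*Cy⌉₊ : ℝ) := Nat.le_ceil _
    have h3 : ((⌈2*Cy⌉₊ : ℕ):ℝ) + 1 ≤ (n:ℝ) := by exact_mod_cast h1
    linarith
  have hn0 : (0:ℝ) < n := by positivity
  have hGpos : 0 < Real.Gamma y := Real.Gamma_pos_of_pos hy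
  have hGinv : 0 < (Real.Gamma y)⁻¹ := by positivity
  set t := Lfun y n - Λ with ht
  have htb : |t| ≤ 2*Cy/(n:ℝ) := Lfun_dist y hy hn2
  have ht1 : |t| ≤ 1 := by
    apply le_trans htb
    rw [div_le_one hn0]
    linarith
  have hexp : |Real.exp t - 1| ≤ 2*|t| := Real.abs_exp_sub_one_le ht1
  have hgn : Real.exp (Lfun y n) = Pprod y n * (n:ℝ)^((1:ℝ)-y) := by
    rw [Lfun, Real.exp_add, Real.exp_log (Pprod_pos hy n), ← Real.log_rpow hn0,
      Real.exp_log (Real.rpow_pos_of_pos hn0 _)]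
  have hexpΛ : Real.exp Λ = (Real.Gamma y)⁻¹ := Real.exp_log hGinv
  have hP : Pprod y n = Real.exp (Lfun y n) * (n:ℝ)^(y-1) := by
    rw [hgn, mul_assoc, ← Real.rpow_add hn0]
    norm_num
  have hkey : Pprod y n - (Real.Gamma y)⁻¹ * (n:ℝ)^(y-1)
      = (Real.Gamma y)⁻¹ * (Real.exp t - 1) * (n:ℝ)^(y-1) := by
    rw [hP, ht, Real.exp_sub, hexpΛ]
    field_simp
  rw [hkey]
  rw [abs_mul, abs_mul, abs_of_pos hGinv, abs_of_pos (Real.rpow_pos_of_pos hn0 (y-1))]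
  calc (Real.Gamma y)⁻¹ * |Real.exp t - 1| * (n:ℝ)^(y-1)
      ≤ (Real.Gamma y)⁻¹ * (2*(2*Cy/(n:ℝ))) * (n:ℝ)^(y-1) := by
        gcongr
        exact le_trans hexp (by linarith)
    _ = 4*Cy * ((Real.Gamma y)⁻¹ * (n:ℝ)^(y-1)) * (1/(n:ℝ)) := by
        ring

set_option maxHeartbeats 2000000 in
/-- For `a > 1` and `p = pCoeff (aℕ)`:
(i) `p(an) = (1/Γ(1/a))·n^{1/a−1}·(1 + O(1/n))`;
(ii) `p(m) = 0` whenever `a ∤ m`;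
(iii) there is no `C > 0` and `β > 0` with `p(n) = C·n^{1/a−1}(1 + O(n^{−β}))` along all
integers `n`;
(iv) nevertheless `B(k) = ∑_{l≤k} l·p(l)` has a power-law asymptotic with remainder
`O(1/k)`. -/
theorem pCoeff_multiples_asymptotics (a : ℕ) (ha : 1 < a) :
    (∃ C : ℝ, ∃ N : ℕ, ∀ n ≥ N,
      |pCoeff (posMultiples a) (a * n) -
          (Real.Gamma (1 / (a : ℝ)))⁻¹ * (n : ℝ) ^ (1 / (a : ℝ) - 1)| ≤
        C * |(Real.Gamma (1 / (a : ℝ)))⁻¹ * (n : ℝ) ^ (1 / (a : ℝ) - 1)| * (1 / (n : ℝ))) ∧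
    (∀ m : ℕ, ¬ a ∣ m → pCoeff (posMultiples a) m = 0) ∧
    (¬ ∃ C : ℝ, 0 < C ∧ ∃ β : ℝ, 0 < β ∧ ∃ K : ℝ, ∃ N : ℕ, ∀ n ≥ N,
      |pCoeff (posMultiples a) n - C * (n : ℝ) ^ (1 / (a : ℝ) - 1)| ≤
        K * |C * (n : ℝ) ^ (1 / (a : ℝ) - 1)| * (n : ℝ) ^ (-β)) ∧
    (∃ c : ℝ, 0 < c ∧ ∃ K : ℝ, ∃ N : ℕ, ∀ k ≥ N,
      |(∑ l ∈ Finset.Icc 1 k, (l : ℝ) * pCoeff (posMultiples a) l) -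
          c * (k : ℝ) ^ (1 / (a : ℝ) + 1)| ≤
        K * |c * (k : ℝ) ^ (1 / (a : ℝ) + 1)| * (1 / (k : ℝ))) := by
  have haR : (0:ℝ) < a := by positivity
  set x : ℝ := 1 / (a:ℝ) with hxdef
  have hx : 0 < x := by positivity
  have hx1 : x ≤ 1/2 := by
    rw [hxdef]
    rw [div_le_div_iff₀ haR (by norm_num)]
    have : (2:ℝ) ≤ a := by exact_mod_cast ha
    linarith
  refine ⟨?_, fun m hm => (pCoeff_formula a ha m).1 hm, ?_, ?_⟩
  -- Part (i)
  · obtain ⟨C, hC0, N, hN1, hb⟩ := Pprod_asym x hx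
    refine ⟨C, N, fun n hn => ?_⟩
    have hn1 : 1 ≤ n := le_trans hN1 hn
    have hn0 : (0:ℝ) < n := by exact_mod_cast hn1
    have hGinv : 0 < (Real.Gamma x)⁻¹ := by
      have := Real.Gamma_pos_of_pos hx
      positivity
    have hpos : 0 < (Real.Gamma x)⁻¹ * (n:ℝ)^(x-1) :=
      mul_pos hGinv (Real.rpow_pos_of_pos hn0 _)
    rw [(pCoeff_formula a ha (a*n)).2 n rfl, abs_of_pos hpos]
    exact hb n hn
  -- Part (iii)
  · rintro ⟨C, hC, β, hβ, K, N, h⟩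
    have hInf : Filter.Tendsto (fun n : ℕ => (n:ℝ)^β) Filter.atTop Filter.atTop :=
      (tendsto_rpow_atTop hβ).comp tendsto_natCast_atTop_atTop
    obtain ⟨M₁, hM₁⟩ := Filter.eventually_atTop.mp (hInf.eventually_gt_atTop K)
    set n : ℕ := a*(M₁+N)+1 with hndef
    have hnN : N ≤ n := by
      have : M₁ + N ≤ a*(M₁+N) := Nat.le_mul_of_pos_left _ (by omega)
      omega
    have hnM : M₁ ≤ n := by
      have : M₁ + N ≤ a*(M₁+N) := Nat.le_mul_of_pos_left _ (by omega)
      omega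
    have hnd : ¬ a ∣ n := by
      rintro ⟨c, hc⟩
      have h1 : a*(M₁+N) < a*c := by omega
      have h2 : M₁+N < c := by
        by_contra hcon
        push_neg at hcon
        exact absurd (Nat.mul_le_mul_left a hcon) (by omega)
      have h3 : a*(M₁+N+1) ≤ a*c := Nat.mul_le_mul_left a h2
      rw [Nat.mul_succ] at h3
      omega
    have hn0 : (0:ℝ) < n := by positivity
    have hp0 : pCoeff (posMultiples a) n = 0 := (pCoeff_formula a ha n).1 hnd
    have hspec := h n hnN
    rw [hp0] at hspec
    have hpow : 0 < (n:ℝ)^(x-1) := Real.rpow_pos_of_pos hn0 _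
    have hCn : 0 < C * (n:ℝ)^(x-1) := mul_pos hC hpow
    rw [zero_sub, abs_neg, abs_of_pos hCn] at hspec
    have hnegpow : (0:ℝ) < (n:ℝ)^(-β) := Real.rpow_pos_of_pos hn0 _
    have h2 : K * (n:ℝ)^(-β) < 1 := by
      have hKlt : K < (n:ℝ)^β := hM₁ n hnM
      have : K * (n:ℝ)^(-β) < (n:ℝ)^β * (n:ℝ)^(-β) :=
        mul_lt_mul_of_pos_right hKlt hnegpow
      rwa [← Real.rpow_add hn0, add_neg_cancel, Real.rpow_zero] at this
    have hre : K * (C * (n:ℝ)^(x-1)) * (n:ℝ)^(-β) = (C * (n:ℝ)^(x-1)) * (K * (n:ℝ)^(-β)) := by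
      ring
    have h3 := mul_lt_mul_of_pos_left h2 hCn
    rw [mul_one] at h3
    linarith
  -- Part (iv)
  · obtain ⟨C₂, hC₂0, N₂, hN₂1, hb₂⟩ := Pprod_asym (x+2) (by positivity)
    have hG₂ : 0 < Real.Gamma (x+2) := Real.Gamma_pos_of_pos (by positivity)
    have hG₂inv : 0 < (Real.Gamma (x+2))⁻¹ := by positivity
    set c : ℝ := (Real.Gamma (x+2))⁻¹ * (a:ℝ)^(-(x+1)) with hcdef
    have hc0 : 0 < c := mul_pos hG₂inv (Real.rpow_pos_of_pos haR _)
    refine ⟨c, hc0, 2*(a:ℝ)*C₂ + 4*(a:ℝ), max (4*a) (a*(N₂+1)), fun k hk => ?_⟩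
    have hk4a : 4*a ≤ k := le_trans (le_max_left _ _) hk
    have hkN₂ : a*(N₂+1) ≤ k := le_trans (le_max_right _ _) hk
    have hk1 : 1 ≤ k := by omega
    have hk0 : (0:ℝ) < k := by exact_mod_cast hk1
    obtain ⟨N, hN⟩ : ∃ N, N = k / a := ⟨_, rfl⟩
    have hdm := Nat.div_add_mod k a
    have hml : k % a < a := Nat.mod_lt _ (by omega)
    have hNk : a * N ≤ k := by rw [hN]; exact Nat.le.intro hdm
    have hkN : k < a * (N + 1) := by rw [hN, Nat.mul_succ]; omega
    have hN₂N : N₂ + 1 ≤ N := by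
      by_contra hcon
      push_neg at hcon
      have h5 : a*(N+1) ≤ a*(N₂+1) := Nat.mul_le_mul_left a (by omega)
      omega
    set m : ℕ := N - 1 with hmdef
    have hm₂ : N₂ ≤ m := by omega
    have hm1 : 1 ≤ m := by omega
    have hm0 : (0:ℝ) < m := by exact_mod_cast hm1
    have hmcast : (m:ℝ) = (N:ℝ) - 1 := by
      rw [hmdef, Nat.cast_sub (by omega)]
      norm_num
    have hBeq : ∑ l ∈ Finset.Icc 1 k, (l:ℝ) * pCoeff (posMultiples a) l
        = Pprod (x+2) m := by
      rw [B_formula a ha (by omega : a ≤ k), ← hN]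
    have hNkR : (a:ℝ) * N ≤ k := by exact_mod_cast hNk
    have hkNR : (k:ℝ) < a * ((N:ℝ) + 1) := by exact_mod_cast hkN
    have hka : (0:ℝ) < (k:ℝ)/a := by positivity
    have hmle : (m:ℝ) ≤ (k:ℝ)/a := by
      rw [hmcast, le_div_iff₀ haR]
      nlinarith
    have hmge : (k:ℝ)/a - 2 ≤ (m:ℝ) := by
      have hdiv : (k:ℝ)/a ≤ (N:ℝ)+1 := by
        rw [div_le_iff₀ haR]
        nlinarith [hkNR]
      rw [hmcast]
      linarith
    have hck : c * (k:ℝ)^(x+1) = (Real.Gamma (x+2))⁻¹ * ((k:ℝ)/a)^(x+1) := by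
      rw [hcdef, Real.div_rpow (le_of_lt hk0) (le_of_lt haR), Real.rpow_neg (le_of_lt haR)]
      field_simp
    have hy1 : x + 2 - 1 = x + 1 := by ring
    have hb₂' := hb₂ m hm₂
    rw [hy1] at hb₂'
    have hpowm : 0 < (m:ℝ)^(x+1) := Real.rpow_pos_of_pos hm0 _
    have hpowka : 0 < ((k:ℝ)/a)^(x+1) := Real.rpow_pos_of_pos hka _
    -- m^{x+1} ≤ (k/a)^{x+1}
    have hple : (m:ℝ)^(x+1) ≤ ((k:ℝ)/a)^(x+1) :=
      Real.rpow_le_rpow (le_of_lt hm0) hmle (by positivity)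
    -- 1/m ≤ 2a/k
    have h2am : (k:ℝ) ≤ 2*a*(m:ℝ) := by
      rw [hmcast]
      have h4aR : (4*a : ℝ) ≤ k := by exact_mod_cast hk4a
      nlinarith
    have hinvm : 1/(m:ℝ) ≤ 2*(a:ℝ)/k := by
      rw [div_le_div_iff₀ hm0 hk0]
      linarith [h2am]
    -- (k/a)^{x+1} - m^{x+1} ≤ (k/a)^{x+1} * (4a/k)
    have hdiff : ((k:ℝ)/a)^(x+1) - (m:ℝ)^(x+1) ≤ ((k:ℝ)/a)^(x+1) * (4*a/k) := by
      set u : ℝ := 2*a/k with hudef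
      have hu0 : 0 < u := by positivity
      have hu12 : u ≤ 1/2 := by
        rw [hudef, div_le_div_iff₀ hk0 (by norm_num)]
        have : (4*a : ℝ) ≤ k := by exact_mod_cast hk4a
        linarith
      have h1u : 0 < 1 - u := by linarith
      have hlow : ((k:ℝ)/a) * (1-u) ≤ (m:ℝ) := by
        have : ((k:ℝ)/a) * (1-u) = (k:ℝ)/a - 2 := by
          rw [hudef]
          field_simp
        linarith [hmge, this.le]
      have hstep1 : (((k:ℝ)/a) * (1-u))^(x+1) ≤ (m:ℝ)^(x+1) :=
        Real.rpow_le_rpow (by positivity) hlow (by positivity)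
      have hstep2 : (((k:ℝ)/a) * (1-u))^(x+1) = ((k:ℝ)/a)^(x+1) * (1-u)^(x+1) :=
        Real.mul_rpow (le_of_lt hka) (le_of_lt h1u)
      have hstep3 : (1-u)^((2:ℕ):ℝ) ≤ (1-u)^(x+1) :=
        Real.rpow_le_rpow_of_exponent_ge h1u (by linarith) (by push_cast; linarith [hx1])
      have hstep4 : (1-u)^((2:ℕ):ℝ) = (1-u)^(2:ℕ) := Real.rpow_natCast _ 2
      have hstep5 : (1:ℝ) - 2*u ≤ (1-u)^(2:ℕ) := by nlinarith
      have hfin : ((k:ℝ)/a)^(x+1) * (1 - 2*u) ≤ (m:ℝ)^(x+1) := by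
        calc ((k:ℝ)/a)^(x+1) * (1 - 2*u) ≤ ((k:ℝ)/a)^(x+1) * (1-u)^(x+1) := by
              apply mul_le_mul_of_nonneg_left _ (le_of_lt hpowka)
              calc (1:ℝ) - 2*u ≤ (1-u)^(2:ℕ) := hstep5
                _ = (1-u)^((2:ℕ):ℝ) := hstep4.symm
                _ ≤ (1-u)^(x+1) := hstep3
          _ = (((k:ℝ)/a) * (1-u))^(x+1) := hstep2.symm
          _ ≤ (m:ℝ)^(x+1) := hstep1
      have : ((k:ℝ)/a)^(x+1) * (2*u) = ((k:ℝ)/a)^(x+1) * (4*a/k) := by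
        rw [hudef]; ring
      nlinarith [hfin]
    -- combine
    rw [hBeq, hck]
    have habs : |(Real.Gamma (x+2))⁻¹ * ((k:ℝ)/a)^(x+1)| = (Real.Gamma (x+2))⁻¹ * ((k:ℝ)/a)^(x+1) :=
      abs_of_pos (mul_pos hG₂inv hpowka)
    rw [habs]
    calc |Pprod (x+2) m - (Real.Gamma (x+2))⁻¹ * ((k:ℝ)/a)^(x+1)|
        ≤ |Pprod (x+2) m - (Real.Gamma (x+2))⁻¹ * (m:ℝ)^(x+1)|
          + |(Real.Gamma (x+2))⁻¹ * (m:ℝ)^(x+1) - (Real.Gamma (x+2))⁻¹ * ((k:ℝ)/a)^(x+1)| := by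
          have := abs_sub_le (Pprod (x+2) m) ((Real.Gamma (x+2))⁻¹ * (m:ℝ)^(x+1))
            ((Real.Gamma (x+2))⁻¹ * ((k:ℝ)/a)^(x+1))
          exact this
      _ ≤ C₂ * ((Real.Gamma (x+2))⁻¹ * (m:ℝ)^(x+1)) * (1/(m:ℝ))
          + (Real.Gamma (x+2))⁻¹ * (((k:ℝ)/a)^(x+1) - (m:ℝ)^(x+1)) := by
          gcongr
          rw [abs_sub_comm, ← mul_sub, abs_mul, abs_of_pos hG₂inv,
            abs_of_nonneg (by linarith [hple] : (0:ℝ) ≤ ((k:ℝ)/a)^(x+1) - (m:ℝ)^(x+1))]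
      _ ≤ C₂ * ((Real.Gamma (x+2))⁻¹ * ((k:ℝ)/a)^(x+1)) * (2*(a:ℝ)/k)
          + (Real.Gamma (x+2))⁻¹ * (((k:ℝ)/a)^(x+1) * (4*a/k)) := by
          gcongr
      _ = (2*(a:ℝ)*C₂ + 4*(a:ℝ)) * ((Real.Gamma (x+2))⁻¹ * ((k:ℝ)/a)^(x+1)) * (1/(k:ℝ)) := by
          field_simp
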